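/- Let (X,d) be a proper, geodesic, non-branching metric space, let Ω ⊆ X be open with ∂Ω ≠ ∅, let ε > 0, and let δ be the signed distance from ∂Ω. Then for every x ∈ Ω ∩ T_δ^{nb} there exists y ∈ T_δ^{nb} with (x,y) ∈ R_δ and 0 < δ(y) < ε; equivalently, every transport-ray equivalence class through a point of Ω meets the tubular neighbourhood {0 < δ < ε}, so 𝔔(Ω ∩ T_δ^{nb}) = 𝔔({0 < δ < ε} ∩ T_δ^{nb}) for the quotient map 𝔔 of the transport-ray partition. -/

import Mathlib

open Metric Set Filter MeasureTheory

variable {X : Type*}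

/-- A geodesic parameterized on `[0,1]`. -/
def IsGeodesic [MetricSpace X] (γ : ℝ → X) : Prop :=
  ∀ s ∈ Set.Icc (0:ℝ) 1, ∀ t ∈ Set.Icc (0:ℝ) 1,
    dist (γ s) (γ t) = |s - t| * dist (γ 0) (γ 1)

/-- Every pair of points is joined by a geodesic. -/
def GeodesicSpace' (X : Type*) [MetricSpace X] : Prop :=
  ∀ x y : X, ∃ γ : ℝ → X, IsGeodesic γ ∧ γ 0 = x ∧ γ 1 = y

/-- Non-branching: two geodesics agreeing on `[0,t]`, `t ∈ (0,1)`, agree on `[0,1]`. -/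
def NonBranching (X : Type*) [MetricSpace X] : Prop :=
  ∀ γ₁ γ₂ : ℝ → X, IsGeodesic γ₁ → IsGeodesic γ₂ →
    ∀ t ∈ Set.Ioo (0:ℝ) 1, (∀ s ∈ Set.Icc (0:ℝ) t, γ₁ s = γ₂ s) →
      ∀ s ∈ Set.Icc (0:ℝ) 1, γ₁ s = γ₂ s

open scoped Classical in
/-- Signed distance from the boundary of `Ω`. -/
noncomputable def signedDist' [MetricSpace X] (Ω : Set X) (x : X) : ℝ :=
  if x ∈ Ω then Metric.infDist x (frontier Ω) else -Metric.infDist x (frontier Ω)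
/-- The set `Γ_u`. -/
def Gamma [MetricSpace X] (u : X → ℝ) : Set (X × X) :=
  {p | u p.1 - u p.2 = dist p.1 p.2}

/-- The transport relation `R_u = Γ_u ∪ Γ_u⁻¹`. -/
def Ru [MetricSpace X] (u : X → ℝ) : Set (X × X) :=
  Gamma u ∪ {p | (p.2, p.1) ∈ Gamma u}

/-- The transport set `T_u`. -/
def Tu [MetricSpace X] (u : X → ℝ) : Set X :=
  {x | ∃ y, y ≠ x ∧ (x, y) ∈ Ru u}

/-- The forward branching set `A⁺`. -/
def Aplus [MetricSpace X] (u : X → ℝ) : Set X :=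
  {x ∈ Tu u | ∃ y z, (x, y) ∈ Gamma u ∧ (x, z) ∈ Gamma u ∧ (y, z) ∉ Ru u}

/-- The backward branching set `A⁻`. -/
def Aminus [MetricSpace X] (u : X → ℝ) : Set X :=
  {x ∈ Tu u | ∃ y z, (y, x) ∈ Gamma u ∧ (z, x) ∈ Gamma u ∧ (y, z) ∉ Ru u}

/-- The non-branched transport set `T_u^{nb}`. -/
def Tnb [MetricSpace X] (u : X → ℝ) : Set X :=
  Tu u \ (Aplus u ∪ Aminus u)

section Aux

variable [MetricSpace X]

lemma gamma_mem_iff {u : X → ℝ} {a b : X} : (a, b) ∈ Gamma u ↔ u a - u b = dist a b :=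
  Iff.rfl

lemma gamma_refl (u : X → ℝ) (a : X) : (a, a) ∈ Gamma u := by
  simp [Gamma]

lemma gamma_trans {u : X → ℝ} (hu : ∀ a b, u a - u b ≤ dist a b) {a b c : X}
    (h1 : (a, b) ∈ Gamma u) (h2 : (b, c) ∈ Gamma u) : (a, c) ∈ Gamma u := by
  have h1' : u a - u b = dist a b := h1
  have h2' : u b - u c = dist b c := h2
  have hle : u a - u c ≤ dist a c := hu a c
  have htri : dist a c ≤ dist a b + dist b c := dist_triangle a b c
  have : dist a c ≤ u a - u c := by linarith
  show u a - u c = dist a c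
  exact le_antisymm hle this

lemma ru_symm {u : X → ℝ} {a b : X} (h : (a, b) ∈ Ru u) : (b, a) ∈ Ru u := by
  rcases h with h | h
  · exact Or.inr h
  · exact Or.inl h

/-- u is nonincreasing along a Γ-geodesic; all pairs along such a geodesic are in Γ. -/
lemma gamma_along {u : X → ℝ} (hu : ∀ a b, u a - u b ≤ dist a b) {γ : ℝ → X}
    (hγ : IsGeodesic γ) (hend : (γ 0, γ 1) ∈ Gamma u) {s t : ℝ}
    (hs : s ∈ Set.Icc (0:ℝ) 1) (ht : t ∈ Set.Icc (0:ℝ) 1) (hst : s ≤ t) :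
    (γ s, γ t) ∈ Gamma u := by
  set D := dist (γ 0) (γ 1) with hD
  have h0 : (0:ℝ) ∈ Set.Icc (0:ℝ) 1 := by constructor <;> norm_num
  have h1 : (1:ℝ) ∈ Set.Icc (0:ℝ) 1 := by constructor <;> norm_num
  have e1 : dist (γ 0) (γ s) = s * D := by
    rw [hγ 0 h0 s hs]; rw [abs_of_nonpos (by linarith [hs.1])]; ring
  have e2 : dist (γ s) (γ t) = (t - s) * D := by
    rw [hγ s hs t ht]; rw [abs_of_nonpos (by linarith)]; ring
  have e3 : dist (γ t) (γ 1) = (1 - t) * D := by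
    rw [hγ t ht 1 h1]; rw [abs_of_nonpos (by linarith [ht.2])]; ring
  have hend' : u (γ 0) - u (γ 1) = D := hend
  have a1 : u (γ 0) - u (γ s) ≤ s * D := e1 ▸ hu (γ 0) (γ s)
  have a2 : u (γ s) - u (γ t) ≤ (t - s) * D := e2 ▸ hu (γ s) (γ t)
  have a3 : u (γ t) - u (γ 1) ≤ (1 - t) * D := e3 ▸ hu (γ t) (γ 1)
  have : u (γ s) - u (γ t) = (t - s) * D := by linarith
  rw [gamma_mem_iff, e2]; exact this

lemma IsGeodesic.continuousOn {γ : ℝ → X} (h : IsGeodesic γ) :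
    ContinuousOn γ (Set.Icc 0 1) := by
  have : LipschitzOnWith (Real.toNNReal (dist (γ 0) (γ 1))) γ (Set.Icc 0 1) := by
    apply LipschitzOnWith.of_dist_le'
    intro s hs t ht
    rw [h s hs t ht, Real.dist_eq, mul_comm]
  exact this.continuousOn

lemma IsGeodesic.scale {γ : ℝ → X} (h : IsGeodesic γ) {c : ℝ} (hc : c ∈ Set.Icc (0:ℝ) 1) :
    IsGeodesic (fun s => γ (c * s)) := by
  intro s hs t ht
  have hmem : ∀ r ∈ Set.Icc (0:ℝ) 1, c * r ∈ Set.Icc (0:ℝ) 1 := by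
    intro r hr
    constructor
    · exact mul_nonneg hc.1 hr.1
    · calc c * r ≤ 1 * 1 := mul_le_mul hc.2 hr.2 hr.1 zero_le_one
        _ = 1 := one_mul 1
  simp only
  have h0 : (0:ℝ) ∈ Set.Icc (0:ℝ) 1 := by constructor <;> norm_num
  have e0 : dist (γ (c * 0)) (γ (c * 1)) = c * dist (γ 0) (γ 1) := by
    rw [mul_zero, mul_one]
    rw [h 0 h0 c (by simpa using hmem 1 (by constructor <;> norm_num))]
    rw [abs_of_nonpos (by linarith [hc.1])]; ring
  rw [h (c * s) (hmem s hs) (c * t) (hmem t ht), e0]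
  rw [show c * s - c * t = c * (s - t) by ring, abs_mul, abs_of_nonneg hc.1]
  ring

end Aux
section Aux2

variable [MetricSpace X]

/-- Concatenate a given geodesic `α : x → y` with a geodesic `y → b`, when
`y` lies metrically between `x` and `b`. -/
lemma exists_concat (hgeo : GeodesicSpace' X) {x y b : X} {α : ℝ → X}
    (hα : IsGeodesic α) (hα0 : α 0 = x) (hα1 : α 1 = y)
    (hd1 : 0 < dist x y) (hd2 : 0 < dist y b)
    (hadd : dist x y + dist y b = dist x b) :
    ∃ γ : ℝ → X, IsGeodesic γ ∧ γ 0 = x ∧ γ 1 = b ∧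
      ∀ s ∈ Set.Icc (0:ℝ) 1, γ (s * (dist x y / dist x b)) = α s := by
  obtain ⟨η, hη, hη0, hη1⟩ := hgeo y b
  set d1 := dist x y with hd1def
  set d2 := dist y b with hd2def
  set D := dist x b with hDdef
  have hD : 0 < D := by rw [← hadd]; positivity
  have hαd : dist (α 0) (α 1) = d1 := by rw [hα0, hα1]
  have hηd : dist (η 0) (η 1) = d2 := by rw [hη0, hη1]
  set γ : ℝ → X := fun s => if s ≤ d1 / D then α (s * D / d1) else η ((s * D - d1) / d2) with hγdef
  have hr1 : 0 < d1 / D := div_pos hd1 hD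
  have hr2 : d1 / D < 1 := by rw [div_lt_one hD]; linarith
  have hγ0 : γ 0 = x := by
    simp only [hγdef]
    rw [if_pos (le_of_lt hr1), zero_mul, zero_div, hα0]
  have hγ1 : γ 1 = b := by
    simp only [hγdef]
    rw [if_neg (by linarith)]
    have h1 : (1 * D - d1) / d2 = 1 := by
      rw [div_eq_one_iff_eq hd2.ne']; linarith
    rw [h1, hη1]
  have hvalα : ∀ s : ℝ, s ≤ d1 / D → γ s = α (s * D / d1) := by
    intro s h1; simp only [hγdef]; rw [if_pos h1]
  have hvalη : ∀ s : ℝ, ¬ s ≤ d1 / D → γ s = η ((s * D - d1) / d2) := by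
    intro s h1; simp only [hγdef]; rw [if_neg h1]
  have hmemα : ∀ s : ℝ, 0 ≤ s → s ≤ d1 / D → s * D / d1 ∈ Set.Icc (0:ℝ) 1 := by
    intro s h0 h1
    constructor
    · positivity
    · rw [div_le_one hd1]
      calc s * D ≤ (d1 / D) * D := by nlinarith
        _ = d1 := by field_simp
  have hmemη : ∀ s : ℝ, d1 / D < s → s ≤ 1 → (s * D - d1) / d2 ∈ Set.Icc (0:ℝ) 1 := by
    intro s h0 h1
    have hs1 : d1 < s * D := by
      calc d1 = (d1 / D) * D := by field_simp
        _ < s * D := by nlinarith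
    constructor
    · apply div_nonneg _ (le_of_lt hd2); linarith
    · rw [div_le_one hd2]; nlinarith
  have key : ∀ s t : ℝ, s ∈ Set.Icc (0:ℝ) 1 → t ∈ Set.Icc (0:ℝ) 1 → s ≤ t →
      dist (γ s) (γ t) = (t - s) * D := by
    intro s t hs ht hst
    by_cases hts : t ≤ d1 / D
    · have hss : s ≤ d1 / D := le_trans hst hts
      rw [hvalα s hss, hvalα t hts,
        hα _ (hmemα s hs.1 hss) _ (hmemα t ht.1 hts), hαd,
        abs_of_nonpos (sub_nonpos.mpr (by gcongr))]
      field_simp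
      ring
    · by_cases hss : s ≤ d1 / D
      · -- mixed regime
        rw [hvalα s hss, hvalη t hts]
        push_neg at hts
        have hsA := hmemα s hs.1 hss
        have htB := hmemη t hts ht.2
        have h01 : (0:ℝ) ∈ Set.Icc (0:ℝ) 1 := by constructor <;> norm_num
        have h11 : (1:ℝ) ∈ Set.Icc (0:ℝ) 1 := by constructor <;> norm_num
        have dAy : dist (α (s * D / d1)) y = d1 - s * D := by
          rw [← hα1, hα _ hsA _ h11, hαd, abs_of_nonpos (by linarith [hsA.2])]
          field_simp
          try ring
        have dxA : dist x (α (s * D / d1)) = s * D := by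
          rw [← hα0, hα _ h01 _ hsA, hαd, abs_of_nonpos (by linarith [hsA.1])]
          field_simp
          ring
        have dyB : dist y (η ((t * D - d1) / d2)) = t * D - d1 := by
          rw [← hη0, hη _ h01 _ htB, hηd, abs_of_nonpos (by linarith [htB.1])]
          field_simp
          ring
        have dBb : dist (η ((t * D - d1) / d2)) b = D - t * D := by
          rw [← hη1, hη _ htB _ h11, hηd, abs_of_nonpos (by linarith [htB.2])]
          field_simp
          linarith
        have tri1 : dist (α (s * D / d1)) (η ((t * D - d1) / d2)) ≤
            dist (α (s * D / d1)) y + dist y (η ((t * D - d1) / d2)) :=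
          dist_triangle _ _ _
        have tri2 : dist x b ≤ dist x (α (s * D / d1)) +
            dist (α (s * D / d1)) (η ((t * D - d1) / d2)) +
            dist (η ((t * D - d1) / d2)) b :=
          dist_triangle4 _ _ _ _
        rw [← hDdef] at tri2
        linarith
      · rw [hvalη s hss, hvalη t hts]
        push_neg at hss hts
        rw [hη _ (hmemη s hss hs.2) _ (hmemη t hts ht.2), hηd,
          abs_of_nonpos (sub_nonpos.mpr (by gcongr))]
        field_simp
        try ring
  refine ⟨γ, ?_, hγ0, hγ1, ?_⟩
  · intro s hs t ht
    rw [hγ0, hγ1, ← hDdef]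
    rcases le_total s t with h | h
    · rw [key s t hs ht h, abs_of_nonpos (by linarith)]; ring
    · rw [dist_comm, key t s ht hs h, abs_of_nonneg (by linarith)]
  · intro s hs
    have hle : s * (d1 / D) ≤ d1 / D := by nlinarith [hs.1, hs.2, le_of_lt hr1]
    rw [hvalα _ hle]
    congr 1
    field_simp
    try ring
end Aux2
section Aux3

variable [MetricSpace X]

lemma forward_aux (hgeo : GeodesicSpace' X) (hnb : NonBranching X) {u : X → ℝ}
    (hu : ∀ a b, u a - u b ≤ dist a b) {x y a b : X}
    (hxy : (x, y) ∈ Gamma u) (hnexy : x ≠ y)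
    (hya : (y, a) ∈ Gamma u) (hnya : y ≠ a)
    (hyb : (y, b) ∈ Gamma u) (hnyb : y ≠ b)
    (hle : dist x b ≤ dist x a) : (b, a) ∈ Gamma u := by
  have hd1 : 0 < dist x y := dist_pos.mpr hnexy
  have hda : 0 < dist y a := dist_pos.mpr hnya
  have hdb : 0 < dist y b := dist_pos.mpr hnyb
  have hxa : (x, a) ∈ Gamma u := gamma_trans hu hxy hya
  have hxb : (x, b) ∈ Gamma u := gamma_trans hu hxy hyb
  have e1 : u x - u y = dist x y := hxy
  have e2 : u y - u a = dist y a := hya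
  have e3 : u y - u b = dist y b := hyb
  have e4 : u x - u a = dist x a := hxa
  have e5 : u x - u b = dist x b := hxb
  have hadda : dist x y + dist y a = dist x a := by linarith
  have haddb : dist x y + dist y b = dist x b := by linarith
  obtain ⟨α, hα, hα0, hα1⟩ := hgeo x y
  obtain ⟨γa, hγa, hγa0, hγa1, hγaP⟩ := exists_concat hgeo hα hα0 hα1 hd1 hda hadda
  obtain ⟨γb, hγb, hγb0, hγb1, hγbP⟩ := exists_concat hgeo hα hα0 hα1 hd1 hdb haddb
  have hLb : 0 < dist x b := by linarith
  have hLa : 0 < dist x a := by linarith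
  set c : ℝ := dist x b / dist x a with hcdef
  have hc : c ∈ Set.Icc (0:ℝ) 1 :=
    ⟨div_nonneg (le_of_lt hLb) (le_of_lt hLa), (div_le_one hLa).mpr hle⟩
  have hγ₂ : IsGeodesic (fun s => γa (c * s)) := hγa.scale hc
  set t0 : ℝ := dist x y / dist x b with ht0def
  have ht0pos : 0 < t0 := div_pos hd1 hLb
  have ht0 : t0 ∈ Set.Ioo (0:ℝ) 1 := ⟨ht0pos, by rw [div_lt_one hLb]; linarith⟩
  have hagree : ∀ s ∈ Set.Icc (0:ℝ) t0, γb s = (fun s => γa (c * s)) s := by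
    intro s hs
    have hs' : s / t0 ∈ Set.Icc (0:ℝ) 1 :=
      ⟨div_nonneg hs.1 (le_of_lt ht0pos), (div_le_one ht0pos).mpr hs.2⟩
    have eb : γb s = α (s / t0) := by
      have h := hγbP (s / t0) hs'
      rw [div_mul_cancel₀ s ht0pos.ne'] at h
      exact h
    have ea : (fun s => γa (c * s)) s = α (s / t0) := by
      have h := hγaP (s / t0) hs'
      have harg : s / t0 * (dist x y / dist x a) = c * s := by
        rw [ht0def, hcdef]
        field_simp
      rw [harg] at h
      exact h
    rw [eb, ea]
  have hend := hnb γb (fun s => γa (c * s)) hγb hγ₂ t0 ht0 hagree 1 ⟨zero_le_one, le_refl 1⟩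
  simp only [mul_one] at hend
  rw [hγb1] at hend
  have hseg : (γa c, γa 1) ∈ Gamma u := by
    refine gamma_along hu hγa ?_ hc ⟨zero_le_one, le_refl 1⟩ hc.2
    rw [hγa0, hγa1]; exact hxa
  rw [hγa1, ← hend] at hseg
  exact hseg

lemma forward_key (hgeo : GeodesicSpace' X) (hnb : NonBranching X) {u : X → ℝ}
    (hu : ∀ a b, u a - u b ≤ dist a b) {x y a b : X}
    (hxy : (x, y) ∈ Gamma u) (hne : x ≠ y)
    (hya : (y, a) ∈ Gamma u) (hyb : (y, b) ∈ Gamma u) : (a, b) ∈ Ru u := by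
  by_cases ha : y = a
  · exact Or.inl (ha ▸ hyb)
  by_cases hb : y = b
  · exact Or.inr (show (b, a) ∈ Gamma u from hb ▸ hya)
  rcases le_total (dist x b) (dist x a) with h | h
  · exact Or.inr (forward_aux hgeo hnb hu hxy hne hya ha hyb hb h)
  · exact Or.inl (forward_aux hgeo hnb hu hxy hne hyb hb hya ha h)

lemma backward_key (hgeo : GeodesicSpace' X) (hnb : NonBranching X) {u : X → ℝ}
    (hu : ∀ a b, u a - u b ≤ dist a b) {p y a b : X}
    (hay : (a, y) ∈ Gamma u) (hby : (b, y) ∈ Gamma u)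
    (hyp : (y, p) ∈ Gamma u) (hne : y ≠ p) : (a, b) ∈ Ru u := by
  set v : X → ℝ := fun z => -u z with hvdef
  have hv : ∀ s t : X, v s - v t ≤ dist s t := by
    intro s t
    have := hu t s
    simp only [hvdef]
    rw [dist_comm]
    linarith
  have flip : ∀ s t : X, (s, t) ∈ Gamma u → (t, s) ∈ Gamma v := by
    intro s t h
    have h' : u s - u t = dist s t := h
    show v t - v s = dist t s
    simp only [hvdef]
    rw [dist_comm]
    linarith
  have h := forward_key hgeo hnb hv (flip _ _ hyp) (Ne.symm hne) (flip _ _ hay) (flip _ _ hby)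
  rcases h with h | h
  · refine Or.inr ?_
    have h' : v a - v b = dist a b := h
    show u b - u a = dist b a
    simp only [hvdef] at h'
    rw [dist_comm]
    linarith
  · refine Or.inl ?_
    have h' : v b - v a = dist b a := h
    show u a - u b = dist a b
    simp only [hvdef] at h'
    rw [dist_comm]
    linarith

lemma interior_mem_Tnb (hgeo : GeodesicSpace' X) (hnb : NonBranching X) {u : X → ℝ}
    (hu : ∀ a b, u a - u b ≤ dist a b) {x y p : X}
    (hxy : (x, y) ∈ Gamma u) (hyp : (y, p) ∈ Gamma u)
    (h1 : x ≠ y) (h2 : y ≠ p) : y ∈ Tnb u := by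
  constructor
  · exact ⟨p, Ne.symm h2, Or.inl hyp⟩
  · rintro (hA | hA)
    · obtain ⟨-, a, b, hya, hyb, hnR⟩ := hA
      exact hnR (forward_key hgeo hnb hu hxy h1 hya hyb)
    · obtain ⟨-, a, b, hay, hby, hnR⟩ := hA
      exact hnR (backward_key hgeo hnb hu hay hby hyp h2)

lemma rel_trans {u : X → ℝ} (hu : ∀ a b, u a - u b ≤ dist a b) {x y z : X}
    (hx : x ∈ Tnb u) (hxy : (x, y) ∈ Ru u) (hxz : (x, z) ∈ Ru u) : (y, z) ∈ Ru u := by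
  obtain ⟨hxT, hxA⟩ := hx
  rcases hxy with hxy | hxy <;> rcases hxz with hxz | hxz
  · by_contra hn
    exact hxA (Or.inl ⟨hxT, y, z, hxy, hxz, hn⟩)
  · exact Or.inr (gamma_trans hu hxz hxy)
  · exact Or.inl (gamma_trans hu hxy hxz)
  · by_contra hn
    exact hxA (Or.inr ⟨hxT, y, z, hxy, hxz, hn⟩)

lemma class_eq {u : X → ℝ} (hu : ∀ a b, u a - u b ≤ dist a b) {x y : X}
    (hx : x ∈ Tnb u) (hy : y ∈ Tnb u) (hxy : (x, y) ∈ Ru u) :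
    {z ∈ Tnb u | (x, z) ∈ Ru u} = {z ∈ Tnb u | (y, z) ∈ Ru u} := by
  ext z
  simp only [Set.mem_setOf_eq, Set.mem_sep_iff]
  constructor
  · rintro ⟨hzT, hz⟩
    exact ⟨hzT, rel_trans hu hx hxy hz⟩
  · rintro ⟨hzT, hz⟩
    exact ⟨hzT, rel_trans hu hy (ru_symm hxy) hz⟩

end Aux3
section Aux4

variable [MetricSpace X]

lemma signedDist_of_mem {Ω : Set X} {x : X} (h : x ∈ Ω) :
    signedDist' Ω x = Metric.infDist x (frontier Ω) := if_pos h

lemma signedDist_of_not_mem {Ω : Set X} {x : X} (h : x ∉ Ω) :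
    signedDist' Ω x = -Metric.infDist x (frontier Ω) := if_neg h

lemma signedDist_frontier {Ω : Set X} (hΩ : IsOpen Ω) {p : X} (hp : p ∈ frontier Ω) :
    signedDist' Ω p = 0 := by
  have hpn : p ∉ Ω := by
    rw [hΩ.frontier_eq] at hp; exact hp.2
  rw [signedDist_of_not_mem hpn, Metric.infDist_zero_of_mem hp, neg_zero]

lemma signedDist_pos_of_mem {Ω : Set X} (hΩ : IsOpen Ω) (hfr : (frontier Ω).Nonempty)
    {x : X} (h : x ∈ Ω) : 0 < signedDist' Ω x := by
  rw [signedDist_of_mem h]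
  refine (IsClosed.notMem_iff_infDist_pos isClosed_frontier hfr).mp ?_
  rw [hΩ.frontier_eq]
  rintro ⟨-, h2⟩
  exact h2 h

lemma mem_of_signedDist_pos {Ω : Set X} {x : X} (h : 0 < signedDist' Ω x) : x ∈ Ω := by
  by_contra hn
  rw [signedDist_of_not_mem hn] at h
  have := Metric.infDist_nonneg (s := frontier Ω) (x := x)
  linarith

lemma exists_frontier_point {γ : ℝ → X} (hγ : IsGeodesic γ) {Ω : Set X}
    (hΩ : IsOpen Ω) (h0 : γ 0 ∈ Ω) (h1 : γ 1 ∉ Ω) :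
    ∃ s ∈ Set.Icc (0:ℝ) 1, γ s ∈ frontier Ω := by
  by_contra hno
  push_neg at hno
  have hpc : IsPreconnected (γ '' Set.Icc 0 1) := (isPreconnected_Icc).image γ hγ.continuousOn
  have hm0 : (0:ℝ) ∈ Set.Icc (0:ℝ) 1 := ⟨le_refl 0, zero_le_one⟩
  have hm1 : (1:ℝ) ∈ Set.Icc (0:ℝ) 1 := ⟨zero_le_one, le_refl 1⟩
  have hcover : γ '' Set.Icc 0 1 ⊆ Ω ∪ (closure Ω)ᶜ := by
    rintro _ ⟨s, hs, rfl⟩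
    by_cases h : γ s ∈ Ω
    · exact Or.inl h
    · refine Or.inr fun hc => hno s hs ⟨hc, by rwa [hΩ.interior_eq]⟩
  have h1' : γ 1 ∉ closure Ω := fun hc => hno 1 hm1 ⟨hc, by rwa [hΩ.interior_eq]⟩
  obtain ⟨z, hz⟩ := hpc Ω (closure Ω)ᶜ hΩ isClosed_closure.isOpen_compl hcover
      ⟨γ 0, Set.mem_image_of_mem γ hm0, h0⟩ ⟨γ 1, Set.mem_image_of_mem γ hm1, h1'⟩
  exact hz.2.2 (subset_closure hz.2.1)

lemma signedDist_lipschitz (hgeo : GeodesicSpace' X) {Ω : Set X} (hΩ : IsOpen Ω)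
    (x y : X) : signedDist' Ω x - signedDist' Ω y ≤ dist x y := by
  by_cases hx : x ∈ Ω <;> by_cases hy : y ∈ Ω
  · rw [signedDist_of_mem hx, signedDist_of_mem hy]
    linarith [Metric.infDist_le_infDist_add_dist (x := x) (y := y) (s := frontier Ω)]
  · rw [signedDist_of_mem hx, signedDist_of_not_mem hy]
    obtain ⟨γ, hγ, h0, h1⟩ := hgeo x y
    obtain ⟨s, hs, hsf⟩ := exists_frontier_point hγ hΩ (by rw [h0]; exact hx)
      (by rw [h1]; exact hy)
    have hm0 : (0:ℝ) ∈ Set.Icc (0:ℝ) 1 := ⟨le_refl 0, zero_le_one⟩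
    have hm1 : (1:ℝ) ∈ Set.Icc (0:ℝ) 1 := ⟨zero_le_one, le_refl 1⟩
    have d1 : dist x (γ s) = s * dist x y := by
      have h := hγ 0 hm0 s hs
      rw [h0, h1] at h
      rw [h, abs_of_nonpos (by linarith [hs.1])]
      ring
    have d2 : dist (γ s) y = (1 - s) * dist x y := by
      have h := hγ s hs 1 hm1
      rw [h0, h1] at h
      rw [h, abs_of_nonpos (by linarith [hs.2])]
      ring
    have i1 : infDist x (frontier Ω) ≤ s * dist x y := by
      rw [← d1]; exact infDist_le_dist_of_mem hsf
    have i2 : infDist y (frontier Ω) ≤ (1 - s) * dist x y := by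
      rw [← d2, dist_comm]
      exact infDist_le_dist_of_mem hsf
    nlinarith
  · rw [signedDist_of_not_mem hx, signedDist_of_mem hy]
    have h1 := Metric.infDist_nonneg (s := frontier Ω) (x := x)
    have h2 := Metric.infDist_nonneg (s := frontier Ω) (x := y)
    linarith [dist_nonneg (x := x) (y := y)]
  · rw [signedDist_of_not_mem hx, signedDist_of_not_mem hy]
    have h := Metric.infDist_le_infDist_add_dist (x := y) (y := x) (s := frontier Ω)
    rw [dist_comm] at h
    linarith

end Aux4
/-- every transport-ray class through a point of `Ω` meets the
tubular neighbourhood `{0 < δ < ε}`; consequently the family of classes of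
points of `Ω ∩ T_δ^{nb}` coincides with the family of classes of points of
`{0 < δ < ε} ∩ T_δ^{nb}`. -/
theorem rays_meet_tubular_neighbourhood
    [MetricSpace X] [ProperSpace X]
    (hgeo : GeodesicSpace' X) (hnb : NonBranching X)
    (Ω : Set X) (hΩ : IsOpen Ω) (hfr : (frontier Ω).Nonempty)
    (ε : ℝ) (hε : 0 < ε) :
    (∀ x ∈ Ω ∩ Tnb (signedDist' Ω), ∃ y ∈ Tnb (signedDist' Ω),
        (x, y) ∈ Ru (signedDist' Ω) ∧
          0 < signedDist' Ω y ∧ signedDist' Ω y < ε) ∧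
    (fun x => {y ∈ Tnb (signedDist' Ω) | (x, y) ∈ Ru (signedDist' Ω)}) ''
        (Ω ∩ Tnb (signedDist' Ω)) =
      (fun x => {y ∈ Tnb (signedDist' Ω) | (x, y) ∈ Ru (signedDist' Ω)}) ''
        ({x | 0 < signedDist' Ω x ∧ signedDist' Ω x < ε} ∩ Tnb (signedDist' Ω)) := by
  set δ := signedDist' Ω with hδdef
  have hu : ∀ a b : X, δ a - δ b ≤ dist a b := fun a b => signedDist_lipschitz hgeo hΩ a b
  have main : ∀ x ∈ Ω ∩ Tnb δ, ∃ y ∈ Tnb δ,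
      (x, y) ∈ Ru δ ∧ 0 < δ y ∧ δ y < ε := by
    rintro x ⟨hxΩ, hxT⟩
    have hpos : 0 < δ x := signedDist_pos_of_mem hΩ hfr hxΩ
    by_cases hlt : δ x < ε
    · exact ⟨x, hxT, Or.inl (gamma_refl δ x), hpos, hlt⟩
    · push_neg at hlt
      set D := δ x with hDdef
      have hD : 0 < D := hpos
      obtain ⟨p, hpF, hpd⟩ := (isClosed_frontier (s := Ω)).exists_infDist_eq_dist hfr x
      have hdxp : dist x p = D := by
        rw [hDdef, hδdef, signedDist_of_mem hxΩ, hpd]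
      have hδp : δ p = 0 := signedDist_frontier hΩ hpF
      have hxp : (x, p) ∈ Gamma δ := by
        show δ x - δ p = dist x p
        rw [hδp, hdxp]; ring
      obtain ⟨γ, hγ, h0, h1⟩ := hgeo x p
      set t : ℝ := 1 - ε / (2 * D) with htdef
      have hεD : ε / (2 * D) ≤ 1 / 2 := by
        rw [div_le_div_iff₀ (by linarith) (by norm_num)]; linarith
      have hεDpos : 0 < ε / (2 * D) := by positivity
      have htmem : t ∈ Set.Icc (0:ℝ) 1 := ⟨by rw [htdef]; linarith, by rw [htdef]; linarith⟩
      have hm0 : (0:ℝ) ∈ Set.Icc (0:ℝ) 1 := ⟨le_refl 0, zero_le_one⟩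
      have hm1 : (1:ℝ) ∈ Set.Icc (0:ℝ) 1 := ⟨zero_le_one, le_refl 1⟩
      have hend : (γ 0, γ 1) ∈ Gamma δ := by rw [h0, h1]; exact hxp
      have hγ0t : (γ 0, γ t) ∈ Gamma δ := gamma_along hu hγ hend hm0 htmem htmem.1
      have hγt1 : (γ t, γ 1) ∈ Gamma δ := gamma_along hu hγ hend htmem hm1 htmem.2
      have hxy : (x, γ t) ∈ Gamma δ := by rwa [h0] at hγ0t
      have hyp : (γ t, p) ∈ Gamma δ := by rwa [h1] at hγt1
      have hdxt : dist x (γ t) = t * D := by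
        have h := hγ 0 hm0 t htmem
        rw [h0, h1, hdxp] at h
        rw [h, abs_of_nonpos (by linarith [htmem.1])]; ring
      have hdtp : dist (γ t) p = (1 - t) * D := by
        have h := hγ t htmem 1 hm1
        rw [h0, h1, hdxp] at h
        rw [h, abs_of_nonpos (by linarith [htmem.2])]; ring
      have hδy : δ (γ t) = ε / 2 := by
        have e1 : δ x - δ (γ t) = dist x (γ t) := hxy
        rw [hdxt] at e1
        have e2 : δ (γ t) = D - t * D := by rw [← hDdef] at e1; linarith
        rw [e2, htdef]
        field_simp
        ring
      have hypos : 0 < δ (γ t) := by rw [hδy]; positivity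
      have hylt : δ (γ t) < ε := by rw [hδy]; linarith
      have ht2 : 1 / 2 ≤ t := by rw [htdef]; linarith
      have hxney : x ≠ γ t := by
        intro he
        have h : dist x (γ t) = 0 := by rw [← he, dist_self]
        rw [hdxt] at h
        have htpos : 0 < t := by rw [htdef]; linarith
        nlinarith [mul_pos htpos hD]
      have hynep : γ t ≠ p := by
        intro he
        have h : dist (γ t) p = 0 := by rw [he, dist_self]
        rw [hdtp] at h
        have h1t : 0 < 1 - t := by rw [htdef]; linarith
        nlinarith [mul_pos h1t hD]
      have hyT : γ t ∈ Tnb δ := interior_mem_Tnb hgeo hnb hu hxy hyp hxney hynep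
      exact ⟨γ t, hyT, Or.inl hxy, hypos, hylt⟩
  refine ⟨main, ?_⟩
  apply Set.Subset.antisymm
  · rintro S ⟨x, hx, rfl⟩
    obtain ⟨y, hyT, hxyR, hypos, hylt⟩ := main x hx
    exact ⟨y, ⟨⟨hypos, hylt⟩, hyT⟩, (class_eq hu hx.2 hyT hxyR).symm⟩
  · rintro S ⟨x, ⟨⟨hpos, -⟩, hT⟩, rfl⟩
    exact ⟨x, ⟨mem_of_signedDist_pos hpos, hT⟩, rfl⟩
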